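/- Let f₁, f₂ : ℝ → ℝ be convex and differentiable on all of ℝ, and let f(x) = f₁(x) for x ≤ x₀ and f(x) = f₂(x) for x ≥ x₀, with f convex (so f₁(x₀) = f₂(x₀) and f₁'(x₀) ≤ f₂'(x₀)). Then for r > 0 the proximal mapping of f satisfies: P_r f(x) = P_r f₁(x) if x < x₀ + f₁'(x₀)/r; P_r f(x) = x₀ if x₀ + f₁'(x₀)/r ≤ x ≤ x₀ + f₂'(x₀)/r; and P_r f(x) = P_r f₂(x) if x > x₀ + f₂'(x₀)/r. -/

import Mathlib

/-- `p` is a proximal point of `f` at `x` with parameter `r`. -/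
def IsProx (f : ℝ → ℝ) (r x p : ℝ) : Prop :=
  ∀ y : ℝ, f p + r / 2 * (p - x) ^ 2 ≤ f y + r / 2 * (y - x) ^ 2

/-!
With `F y = f y + r / 2 * (y - x) ^ 2` the proximal points of `f` at `x` are the minimizers of the
strictly convex function `F`, hence unique. At `x₀` the left and right derivatives of `F` are
`f₁' x₀ + r (x₀ - x)` and `f₂' x₀ + r (x₀ - x)`. When the first is `≤ 0` and the second `≥ 0`,
the supporting lines at `x₀` show that `x₀` minimizes `F`. When the left derivative is positive,
any minimizer of a convex function with that left derivative at `x₀` lies in `Iio x₀`, since the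
function is antitone to the left of its minimizers; this holds both for `F` and for the objective
built from `f₁`, which agree on `Iio x₀`, and a local minimum of a convex function is global. The
case of a negative right derivative is symmetric.
-/

open Set

namespace ConvexOn

variable {F : ℝ → ℝ} {a d p : ℝ}

lemma antitoneOn_Iic_of_isMinOn (hF : ConvexOn ℝ univ F) (hp : IsMinOn F univ p) :
    AntitoneOn F (Iic p) := fun y _ z (hzp : z ≤ p) hyz ↦ by
  have hz : z ∈ segment ℝ y p := by rw [segment_eq_Icc (hyz.trans hzp)]; exact ⟨hyz, hzp⟩
  exact (hF.le_on_segment (mem_univ y) (mem_univ p) hz).trans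
    (max_le le_rfl (isMinOn_univ_iff.mp hp y))

lemma monotoneOn_Ici_of_isMinOn (hF : ConvexOn ℝ univ F) (hp : IsMinOn F univ p) :
    MonotoneOn F (Ici p) := fun y (hpy : p ≤ y) z _ hyz ↦ by
  have hy : y ∈ segment ℝ p z := by rw [segment_eq_Icc (hpy.trans hyz)]; exact ⟨hpy, hyz⟩
  exact (hF.le_on_segment (mem_univ p) (mem_univ z) hy).trans
    (max_le (isMinOn_univ_iff.mp hp z) le_rfl)

lemma lt_of_isMinOn_of_hasDerivWithinAt_Iio (hF : ConvexOn ℝ univ F) (hp : IsMinOn F univ p)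
    (hd : HasDerivWithinAt F d (Iio a) a) (hd0 : 0 < d) : p < a := by
  by_contra! hap
  have hslope := (hasDerivWithinAt_iff_tendsto_slope' self_notMem_Iio).mp hd
  have : d ≤ 0 := le_of_tendsto hslope <| eventually_nhdsWithin_of_forall fun y (hy : y < a) ↦
    by
      rw [slope_comm]
      exact (slope_nonpos_iff_of_le hy.le).mpr
        (hF.antitoneOn_Iic_of_isMinOn hp (hy.le.trans hap) hap hy.le)
  linarith

lemma gt_of_isMinOn_of_hasDerivWithinAt_Ioi (hF : ConvexOn ℝ univ F) (hp : IsMinOn F univ p)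
    (hd : HasDerivWithinAt F d (Ioi a) a) (hd0 : d < 0) : a < p := by
  by_contra! hpa
  have hslope := (hasDerivWithinAt_iff_tendsto_slope' self_notMem_Ioi).mp hd
  have : 0 ≤ d := ge_of_tendsto hslope <| eventually_nhdsWithin_of_forall fun y (hy : a < y) ↦
    (slope_nonneg_iff_of_le hy.le).mpr
      (hF.monotoneOn_Ici_of_isMinOn hp hpa (hpa.trans hy.le) hy.le)
  linarith

lemma isMinOn_of_hasDerivWithinAt_Iio_Ioi {d₁ d₂ : ℝ} (hF : ConvexOn ℝ univ F)
    (hd₁ : HasDerivWithinAt F d₁ (Iio a) a) (hd₂ : HasDerivWithinAt F d₂ (Ioi a) a)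
    (hd₁0 : d₁ ≤ 0) (hd₂0 : 0 ≤ d₂) : IsMinOn F univ a := by
  refine isMinOn_univ_iff.mpr fun y ↦ ?_
  rcases lt_trichotomy y a with hya | rfl | hay
  · have hslope := hF.slope_le_of_hasDerivWithinAt_Iio (mem_univ y) (mem_univ a) hya hd₁
    exact (slope_nonpos_iff_of_le hya.le).mp (hslope.trans hd₁0)
  · exact le_rfl
  · exact (slope_nonneg_iff_of_le hay.le).mp
      (hd₂0.trans (hF.le_slope_of_hasDerivWithinAt_Ioi (mem_univ a) (mem_univ y) hay hd₂))

lemma isMinOn_iff_of_eqOn {G : ℝ → ℝ} {s : Set ℝ} (hF : ConvexOn ℝ univ F)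
    (hG : ConvexOn ℝ univ G) (hs : IsOpen s) (hFG : EqOn F G s)
    (hFs : ∀ p, IsMinOn F univ p → p ∈ s) (hGs : ∀ p, IsMinOn G univ p → p ∈ s) :
    IsMinOn F univ p ↔ IsMinOn G univ p := by
  have transfer {F G : ℝ → ℝ} (hG : ConvexOn ℝ univ G) (hFG : EqOn F G s)
      (hp : IsMinOn F univ p) (hps : p ∈ s) : IsMinOn G univ p :=
    isMinOn_univ_iff.mpr <| IsMinOn.of_isLocalMin_of_convex_univ
      ((hp.isLocalMin Filter.univ_mem).congr (hFG.eventuallyEq_of_mem (hs.mem_nhds hps))) hG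
  exact ⟨fun hp ↦ transfer hG hFG hp (hFs p hp),
    fun hp ↦ transfer hF hFG.symm hp (hGs p hp)⟩

end ConvexOn

noncomputable def proxObjective (f : ℝ → ℝ) (r x : ℝ) (y : ℝ) : ℝ :=
  f y + r / 2 * (y - x) ^ 2

section proxObjective

variable {f : ℝ → ℝ} {r x : ℝ}

lemma isProx_iff_isMinOn {p : ℝ} : IsProx f r x p ↔ IsMinOn (proxObjective f r x) univ p :=
  (isMinOn_univ_iff (f := proxObjective f r x)).symm

lemma strictConvexOn_mul_sq_sub (hr : 0 < r) (x : ℝ) :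
    StrictConvexOn ℝ univ fun y : ℝ ↦ r / 2 * (y - x) ^ 2 := by
  refine ⟨convex_univ, fun y _ z _ hyz a b ha hb hab ↦ ?_⟩
  obtain rfl : b = 1 - a := by linarith
  have hgap : 0 < r / 2 * (a * (1 - a)) * (y - z) ^ 2 :=
    mul_pos (mul_pos (half_pos hr) (mul_pos ha hb)) (sq_pos_of_ne_zero (sub_ne_zero.2 hyz))
  simp only [smul_eq_mul]
  nlinarith [hgap]

lemma ConvexOn.strictConvexOn_proxObjective (hf : ConvexOn ℝ univ f) (hr : 0 < r) (x : ℝ) :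
    StrictConvexOn ℝ univ (proxObjective f r x) :=
  hf.add_strictConvexOn (strictConvexOn_mul_sq_sub hr x)

lemma HasDerivWithinAt.proxObjective {d p : ℝ} {s : Set ℝ} (hf : HasDerivWithinAt f d s p) :
    HasDerivWithinAt (proxObjective f r x) (d + r * (p - x)) s p := by
  have hq : HasDerivAt (fun y : ℝ ↦ r / 2 * (y - x) ^ 2) (r * (p - x)) p := by
    refine ((((hasDerivAt_id p).sub_const x).fun_pow 2).const_mul (r / 2)).congr_deriv ?_
    simp only [id, Nat.cast_ofNat, mul_one]
    ring
  exact hf.add hq.hasDerivWithinAt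

lemma IsProx.eq (hf : ConvexOn ℝ univ f) (hr : 0 < r) {p q : ℝ} (hp : IsProx f r x p)
    (hq : IsProx f r x q) : p = q :=
  (hf.strictConvexOn_proxObjective hr x).eq_of_isMinOn (isProx_iff_isMinOn.mp hp)
    (isProx_iff_isMinOn.mp hq) (mem_univ p) (mem_univ q)

end proxObjective

section Gluing

variable {f g : ℝ → ℝ} {r x a d : ℝ}

lemma isProx_iff_of_eqOn_Iic (hf : ConvexOn ℝ univ f) (hg : ConvexOn ℝ univ g) (hr : 0 < r)
    (hfg : EqOn f g (Iic a)) (hd : HasDerivWithinAt g d (Iio a) a) (hx : 0 < d + r * (a - x))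
    (p : ℝ) : IsProx f r x p ↔ IsProx g r x p := by
  have hFG : EqOn (proxObjective f r x) (proxObjective g r x) (Iic a) := fun y hy ↦ by
    simp only [proxObjective, hfg hy]
  have hG := hd.proxObjective (r := r) (x := x)
  have hF := hG.congr (fun y hy ↦ hFG (Iio_subset_Iic_self hy)) (hFG (le_refl a))
  have cF := (hf.strictConvexOn_proxObjective hr x).convexOn
  have cG := (hg.strictConvexOn_proxObjective hr x).convexOn
  simp only [isProx_iff_isMinOn]
  exact cF.isMinOn_iff_of_eqOn cG isOpen_Iio (hFG.mono Iio_subset_Iic_self)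
    (fun _ hp ↦ cF.lt_of_isMinOn_of_hasDerivWithinAt_Iio hp hF hx)
    (fun _ hp ↦ cG.lt_of_isMinOn_of_hasDerivWithinAt_Iio hp hG hx)

lemma isProx_iff_of_eqOn_Ici (hf : ConvexOn ℝ univ f) (hg : ConvexOn ℝ univ g) (hr : 0 < r)
    (hfg : EqOn f g (Ici a)) (hd : HasDerivWithinAt g d (Ioi a) a) (hx : d + r * (a - x) < 0)
    (p : ℝ) : IsProx f r x p ↔ IsProx g r x p := by
  have hFG : EqOn (proxObjective f r x) (proxObjective g r x) (Ici a) := fun y hy ↦ by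
    simp only [proxObjective, hfg hy]
  have hG := hd.proxObjective (r := r) (x := x)
  have hF := hG.congr (fun y hy ↦ hFG (Ioi_subset_Ici_self hy)) (hFG (le_refl a))
  have cF := (hf.strictConvexOn_proxObjective hr x).convexOn
  have cG := (hg.strictConvexOn_proxObjective hr x).convexOn
  simp only [isProx_iff_isMinOn]
  exact cF.isMinOn_iff_of_eqOn cG isOpen_Ioi (hFG.mono Ioi_subset_Ici_self)
    (fun _ hp ↦ cF.gt_of_isMinOn_of_hasDerivWithinAt_Ioi hp hF hx)
    (fun _ hp ↦ cG.gt_of_isMinOn_of_hasDerivWithinAt_Ioi hp hG hx)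

lemma isProx_of_hasDerivWithinAt_Iio_Ioi (hf : ConvexOn ℝ univ f) (hr : 0 < r) {d₁ d₂ : ℝ}
    (hd₁ : HasDerivWithinAt f d₁ (Iio a) a) (hd₂ : HasDerivWithinAt f d₂ (Ioi a) a)
    (hx₁ : d₁ + r * (a - x) ≤ 0) (hx₂ : 0 ≤ d₂ + r * (a - x)) : IsProx f r x a :=
  isProx_iff_isMinOn.mpr <| (hf.strictConvexOn_proxObjective hr x).convexOn
    |>.isMinOn_of_hasDerivWithinAt_Iio_Ioi hd₁.proxObjective hd₂.proxObjective hx₁ hx₂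

end Gluing

/-- Proximal mapping of a convex function glued from two convex differentiable pieces. -/
theorem prox_of_two_piece {f f₁ f₂ : ℝ → ℝ} {x₀ : ℝ}
    (h₁c : ConvexOn ℝ Set.univ f₁) (h₂c : ConvexOn ℝ Set.univ f₂)
    (h₁d : Differentiable ℝ f₁) (h₂d : Differentiable ℝ f₂)
    (hle : ∀ x ≤ x₀, f x = f₁ x) (hge : ∀ x, x₀ ≤ x → f x = f₂ x)
    (hconv : ConvexOn ℝ Set.univ f) (r : ℝ) (hr : 0 < r) :
    (∀ x, x < x₀ + deriv f₁ x₀ / r → ∀ p, (IsProx f r x p ↔ IsProx f₁ r x p)) ∧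
    (∀ x, x₀ + deriv f₁ x₀ / r ≤ x → x ≤ x₀ + deriv f₂ x₀ / r →
      (IsProx f r x x₀ ∧ ∀ p, IsProx f r x p → p = x₀)) ∧
    (∀ x, x₀ + deriv f₂ x₀ / r < x → ∀ p, (IsProx f r x p ↔ IsProx f₂ r x p)) := by
  have hd₁ : HasDerivWithinAt f₁ (deriv f₁ x₀) (Iio x₀) x₀ :=
    (h₁d x₀).hasDerivAt.hasDerivWithinAt
  have hd₂ : HasDerivWithinAt f₂ (deriv f₂ x₀) (Ioi x₀) x₀ :=
    (h₂d x₀).hasDerivAt.hasDerivWithinAt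
  refine ⟨fun x hx p ↦ ?_, fun x hx₁ hx₂ ↦ ?_, fun x hx p ↦ ?_⟩
  · rw [← sub_lt_iff_lt_add', lt_div_iff₀ hr] at hx
    exact isProx_iff_of_eqOn_Iic hconv h₁c hr hle hd₁ (by linarith) p
  · rw [← le_sub_iff_add_le', div_le_iff₀ hr] at hx₁
    rw [← sub_le_iff_le_add', le_div_iff₀ hr] at hx₂
    have hmin : IsProx f r x x₀ := isProx_of_hasDerivWithinAt_Iio_Ioi hconv hr
      (hd₁.congr (fun y hy ↦ hle y hy.le) (hle x₀ le_rfl))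
      (hd₂.congr (fun y hy ↦ hge y hy.le) (hge x₀ le_rfl)) (by linarith) (by linarith)
    exact ⟨hmin, fun p hp ↦ hp.eq hconv hr hmin⟩
  · rw [← lt_sub_iff_add_lt', div_lt_iff₀ hr] at hx
    exact isProx_iff_of_eqOn_Ici hconv h₂c hr hge hd₂ (by linarith) p
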